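/- arXiv:1611.08837 — 15 statements merged into one kernel-verified Lean document; each statement's English description precedes it below -/
import Mathlib

section
/- Let R be a p.q.-Baer *-ring and a, b ∈ R. Then the following are equivalent: (1) a*rb = a*ra for all r ∈ R; (2) a = C(a)·b; (3) arb = ara for all r ∈ R. -/
/-- An element `e` of a ring is central if it commutes with everything. -/
def IsCentral {R : Type*} [Ring R] (e : R) : Prop := ∀ r : R, e * r = r * e

/-- A projection in a `*`-ring: a self-adjoint idempotent. -/
def IsProjection {R : Type*} [Ring R] [StarRing R] (e : R) : Prop :=
  e * e = e ∧ star e = e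

/-- `C` assigns to every element `x` its central cover: the smallest central
projection `h` with `h * x = x`. -/
def IsCentralCoverMap {R : Type*} [Ring R] [StarRing R] (C : R → R) : Prop :=
  ∀ x : R, IsProjection (C x) ∧ IsCentral (C x) ∧ C x * x = x ∧
    ∀ f : R, IsProjection f → IsCentral f → f * x = x → C x * f = C x

/-- The annihilator property of central covers in a p.q.-Baer `*`-ring:
`x R y = 0` iff `C(x) y = 0`. -/
def CoverAnn {R : Type*} [Ring R] (C : R → R) : Prop :=
  ∀ x y : R, (∀ r : R, x * r * y = 0) ↔ C x * y = 0

/-- A p.q.-Baer `*`-ring: the right annihilator of every principal right ideal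
`aR` is `eR` for a projection `e`. -/
def IsPQBaerStar (R : Type*) [Ring R] [StarRing R] : Prop :=
  ∀ a : R, ∃ e : R, IsProjection e ∧
    ∀ x : R, (∀ r : R, a * r * x = 0) ↔ e * x = x

/-- Conrad's partial order, expressed via central covers: `a ≤ b` iff `a = C(a) b`. -/
def cle {R : Type*} [Ring R] (C : R → R) (a b : R) : Prop := C a * b = a

/-- `m` is the infimum of `a` and `b` in Conrad's order. -/
def IsCInf {R : Type*} [Ring R] (C : R → R) (a b m : R) : Prop :=
  cle C m a ∧ cle C m b ∧ ∀ d : R, cle C d a → cle C d b → cle C d m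

/-- `s` is the supremum of `a` and `b` in Conrad's order. -/
def IsCSup {R : Type*} [Ring R] (C : R → R) (a b s : R) : Prop :=
  cle C a s ∧ cle C b s ∧ ∀ d : R, cle C a d → cle C b d → cle C s d

lemma Cstar {R : Type*} [Ring R] [StarRing R] (C : R → R)
    (hC : IsCentralCoverMap C) (a : R) : C (star a) = C a := by
  obtain ⟨⟨hp1, hp2⟩, hcen, hcov, hmin⟩ := hC a
  obtain ⟨⟨hp1', hp2'⟩, hcen', hcov', hmin'⟩ := hC (star a)
  have h1 : C a * star a = star a := by
    conv_rhs => rw [← hcov]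
    rw [star_mul, hp2, ← hcen]
  have h2 : C (star a) * a = a := by
    have := congrArg star hcov'
    rw [star_mul, hp2', ← hcen'] at this
    simpa using this
  have e1 : C (star a) * C a = C (star a) :=
    hmin' (C a) ⟨hp1, hp2⟩ hcen h1
  have e2 : C a * C (star a) = C a :=
    hmin (C (star a)) ⟨hp1', hp2'⟩ hcen' h2
  rw [← e1, hcen' (C a), e2]

/-- In a p.q.-Baer `*`-ring the following are equivalent:
(1) `a* r b = a* r a` for all `r`; (2) `a = C(a) b`; (3) `a r b = a r a` for all `r`. -/
theorem stmt1 {R : Type*} [Ring R] [StarRing R] (C : R → R)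
    (hPQ : IsPQBaerStar R) (hC : IsCentralCoverMap C) (hAnn : CoverAnn C)
    (a b : R) :
    ((∀ r : R, star a * r * b = star a * r * a) ↔ a = C a * b) ∧
      ((a = C a * b) ↔ ∀ r : R, a * r * b = a * r * a) := by
  obtain ⟨⟨hp1, hp2⟩, hcen, hcov, hmin⟩ := hC a
  have key : ∀ x : R, ((∀ r : R, x * r * b = x * r * a) ↔ C x * (b - a) = 0) := by
    intro x
    rw [← hAnn x (b - a)]
    constructor
    · intro h r; rw [mul_sub, h r, sub_self]
    · intro h r; have := h r; rw [mul_sub, sub_eq_zero] at this; exact this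
  have key2 : (a = C a * b) ↔ C a * (b - a) = 0 := by
    rw [mul_sub, hcov, sub_eq_zero, eq_comm]
  constructor
  · rw [key (star a), Cstar C hC a, key2]
  · rw [key a, key2]
end

section
/- Let R be a p.q.-Baer *-ring and a, b ∈ R with a ≤ b in Conrad's order. Then C(b − a) = C(b) − C(a). -/
/-- If `a ≤ b` in Conrad's order on a p.q.-Baer `*`-ring then
`C(b - a) = C(b) - C(a)`. -/
theorem stmt3 {R : Type*} [Ring R] [StarRing R] (C : R → R)
    (hPQ : IsPQBaerStar R) (hC : IsCentralCoverMap C) (hAnn : CoverAnn C)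
    (a b : R) (h : cle C a b) :
    C (b - a) = C b - C a := by
  obtain ⟨⟨haidem, hastar⟩, hacent, haa, hamin⟩ := hC a
  obtain ⟨⟨hbidem, hbstar⟩, hbcent, hbb, hbmin⟩ := hC b
  obtain ⟨⟨heidem, hestar⟩, hecent, hee, hemin⟩ := hC (b - a)
  set e := C (b - a) with hedef
  have hab : C a * b = a := h
  -- C b * a = a
  have hCba : C b * a = a := by
    calc C b * a = C b * (C a * b) := by rw [hab]
      _ = C a * (C b * b) := by rw [← mul_assoc, hbcent (C a), mul_assoc]
      _ = a := by rw [hbb, hab]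
  -- C a * C b = C a
  have hCaCb : C a * C b = C a := hamin (C b) ⟨hbidem, hbstar⟩ hbcent hCba
  have hCbCa : C b * C a = C a := by rw [← hacent (C b), hCaCb]
  set f := C b - C a with hfdef
  have hfidem : f * f = f := by
    simp only [hfdef, sub_mul, mul_sub, hbidem, haidem, hCaCb, hCbCa]
    abel
  have hfstar : star f = f := by
    simp only [hfdef, star_sub, hastar, hbstar]
  have hfcent : IsCentral f := fun r => by
    simp only [hfdef, sub_mul, mul_sub, hbcent r, hacent r]
  have hfba : f * (b - a) = b - a := by
    simp only [hfdef, sub_mul, mul_sub, hbb, hCba, hab, haa]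
    abel
  -- e ≤ f
  have hef : e * f = e := hemin f ⟨hfidem, hfstar⟩ hfcent hfba
  -- the join g = e + C a - e * C a covers b
  set g := e + C a - e * C a with hgdef
  have heCa : e * C a = C a * e := hecent (C a)
  have hgidem : g * g = g := by
    simp only [hgdef, sub_mul, mul_sub, add_mul, mul_add, ← mul_assoc]
    simp only [heidem, haidem, heCa]
    simp only [mul_assoc, haidem]
    simp only [← mul_assoc, heidem]
    rw [← heCa, mul_assoc e (C a) (C a), haidem]
    abel
  have hgstar : star g = g := by
    simp only [hgdef, star_sub, star_add, star_mul, hastar, hestar, ← heCa]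
  have hgcent : IsCentral g := fun r => by
    simp only [hgdef, sub_mul, mul_sub, add_mul, mul_add]
    rw [hecent r, hacent r, mul_assoc, hacent r, ← mul_assoc, hecent r, mul_assoc]
  have heba : e * (b - a) = b - a := hee
  have hgb : g * b = b := by
    have h1 : e * b - e * a = b - a := by rw [← mul_sub]; exact heba
    calc g * b = e * b + C a * b - e * (C a * b) := by
          simp only [hgdef, sub_mul, add_mul, mul_assoc]
      _ = e * b + a - e * a := by rw [hab]
      _ = (e * b - e * a) + a := by abel
      _ = b := by rw [h1]; abel
  -- C b ≤ g
  have hCbg : C b * g = C b := hbmin g ⟨hgidem, hgstar⟩ hgcent hgb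
  -- derive f * e = f
  have hCbe : C b * e + C a - C b * (e * C a) = C b := by
    calc C b * e + C a - C b * (e * C a)
        = C b * e + C b * C a - C b * (e * C a) := by rw [hCbCa]
      _ = C b * g := by simp only [hgdef, mul_add, mul_sub]
      _ = C b := hCbg
  have hCbeCa : C b * (e * C a) = e * C a := by
    rw [heCa, ← mul_assoc, hCbCa]
  have h3 : C b * e + C a - e * C a = C b := by
    rw [← hCbeCa]; exact hCbe
  have h4 : C b * e + C a = C b + e * C a := sub_eq_iff_eq_add.mp h3
  have hfe : f * e = f := by
    rw [hfdef, sub_mul, ← heCa, sub_eq_sub_iff_add_eq_add]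
    exact h4
  -- conclude
  have hecomm : e * f = f * e := hecent f
  rw [hedef] at hef hfe hecomm ⊢
  rw [← hef, hecomm, hfe]
end

section
/- Let R be a p.q.-Baer *-ring in which 2 is invertible and let a, b ∈ R satisfy C(b − a) = C(b) − C(a). Then a ≤ b in Conrad's order (i.e., a = C(a)b). -/
/-- In a p.q.-Baer `*`-ring with `2` invertible, if
`C(b - a) = C(b) - C(a)` then `a ≤ b` in Conrad's order. -/
theorem stmt4 {R : Type*} [Ring R] [StarRing R] (C : R → R)
    (hPQ : IsPQBaerStar R) (hC : IsCentralCoverMap C) (hAnn : CoverAnn C)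
    (h2 : IsUnit (2 : R))
    (a b : R) (h : C (b - a) = C b - C a) :
    cle C a b := by
  obtain ⟨⟨hCa2, -⟩, hCac, hCaa, -⟩ := hC a
  obtain ⟨⟨-, -⟩, -, hCbb, -⟩ := hC b
  obtain ⟨⟨hg2, -⟩, -, hgx, -⟩ := hC (b - a)
  rw [h] at hg2 hgx
  have hcomm : C a * C b = C b * C a := hCac (C b)
  rw [sub_mul, mul_sub, mul_sub, hCa2, hcomm] at hg2
  -- hg2 : C b * C b - C b * C a - (C b * C a - C a) = C b - C a
  have haux : C b * C a + C b * C a - (C a + C a) =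
      (C b * C b - C a) - (C b * C b - C b * C a - (C b * C a - C a)) := by abel
  rw [hg2] at haux
  have haux2 : C b * C a + C b * C a - (C a + C a) = C b * C b - C b := by
    rw [haux]; abel
  have hCb2 : C (b) * C (b) = C b := (hC b).1.1
  rw [hCb2, sub_self] at haux2
  have key : C a + C a = C b * C a + C b * C a := (sub_eq_zero.mp haux2).symm
  have hef : C a = C b * C a := by
    refine h2.mul_left_cancel ?_
    rw [two_mul, two_mul]; exact key
  have hfa : C b * a = a := by
    conv_lhs => rw [← hCaa, ← mul_assoc, ← hef, hCaa]
  rw [sub_mul, mul_sub, mul_sub, hCbb, hfa, hCaa] at hgx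
  -- hgx : b - a - (C a * b - a) = b - a
  exact sub_eq_zero.mp (sub_eq_self.mp hgx)
end

section
/- Let R be a p.q.-Baer *-ring in which 2 is invertible and a, b ∈ R. Then a ≤ b in Conrad's order if and only if C(b − a) = C(b) − C(a). -/
/-- In a p.q.-Baer `*`-ring with `2` invertible,
`a ≤ b` in Conrad's order iff `C(b - a) = C(b) - C(a)`. -/
theorem stmt5 {R : Type*} [Ring R] [StarRing R] (C : R → R)
    (hPQ : IsPQBaerStar R) (hC : IsCentralCoverMap C) (hAnn : CoverAnn C)
    (h2 : IsUnit (2 : R)) (a b : R) :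
    cle C a b ↔ C (b - a) = C b - C a := by
  obtain ⟨⟨hgi, hgs⟩, hgc, hgx, hgm⟩ := hC a
  obtain ⟨⟨hhi, hhs⟩, hhc, hhx, hhm⟩ := hC b
  obtain ⟨⟨hki, hks⟩, hkc, hkx, hkm⟩ := hC (b - a)
  set g := C a with hgdef
  set h := C b with hhdef
  set k := C (b - a) with hkdef
  constructor
  · intro hab
    -- hab : g * b = a
    have hga : g * a = a := by
      calc g * a = g * (g * b) := by rw [hab]
        _ = (g * g) * b := by noncomm_ring
        _ = g * b := by rw [hgi]
        _ = a := hab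
    have hha : h * a = a := by
      calc h * a = h * (g * b) := by rw [hab]
        _ = (h * g) * b := by noncomm_ring
        _ = (g * h) * b := by rw [hgc h]
        _ = g * (h * b) := by noncomm_ring
        _ = g * b := by rw [hhx]
        _ = a := hab
    have hgh : g * h = g := by
      have hproj : IsProjection (g * h) := by
        constructor
        · calc g * h * (g * h) = g * (h * g) * h := by noncomm_ring
            _ = g * (g * h) * h := by rw [hgc h]
            _ = (g * g) * (h * h) := by noncomm_ring
            _ = g * h := by rw [hgi, hhi]
        · rw [star_mul, hgs, hhs, ← hgc h]
      have hcent : IsCentral (g * h) := fun r => by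
        rw [mul_assoc, hhc r, ← mul_assoc, ← mul_assoc, hgc r, mul_assoc]
      have hcov : (g * h) * a = a := by
        calc (g * h) * a = g * (h * a) := by noncomm_ring
          _ = g * a := by rw [hha]
          _ = a := hga
      have hmin := hgm (g * h) hproj hcent hcov
      calc g * h = (g * g) * h := by rw [hgi]
        _ = g * (g * h) := by noncomm_ring
        _ = g := hmin
    -- the difference projection
    have hdiff_i : (h - g) * (h - g) = h - g := by
      have e : (h - g) * (h - g) = h * h - g * h - h * g + g * g := by noncomm_ring
      rw [hhi, hgi, ← hgc h, hgh] at e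
      rw [e]; abel
    have hdiff_cov : (h - g) * (b - a) = b - a := by
      have : (h - g) * (b - a) = h * b - h * a - g * b + g * a := by noncomm_ring
      rw [this, hhx, hha, hab, hga]; noncomm_ring
    -- k ≤ h - g
    have hk_le : k * (h - g) = k := by
      apply hkm (h - g) _ _ hdiff_cov
      · exact ⟨hdiff_i, by rw [star_sub, hhs, hgs]⟩
      · intro r
        have : (h - g) * r = h * r - g * r := by noncomm_ring
        rw [this, hhc r, hgc r]; noncomm_ring
    -- u := (h - g) * (1 - k) is zero
    have hucent : IsCentral ((h - g) * (1 - k)) := fun r => by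
      have e1 : (h - g) * (1 - k) * r = (h * r - g * r) - (h * (k * r) - g * (k * r)) := by
        noncomm_ring
      have e2 : r * ((h - g) * (1 - k)) = (r * h - r * g) - ((r * h) * k - (r * g) * k) := by
        noncomm_ring
      rw [e1, e2, hkc r, ← mul_assoc, ← mul_assoc, hhc r, hgc r]
    have hub : (h - g) * (1 - k) * b = 0 := by
      have huba : (h - g) * (1 - k) * (b - a) = 0 := by
        calc (h - g) * (1 - k) * (b - a) = (h - g) * ((b - a) - k * (b - a)) := by noncomm_ring
          _ = (h - g) * ((b - a) - (b - a)) := by rw [hkx]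
          _ = 0 := by noncomm_ring
      have hua : (h - g) * (1 - k) * a = 0 := by
        have h1 : (h - g) * a = 0 := by
          have : (h - g) * a = h * a - g * a := by noncomm_ring
          rw [this, hha, hga]; noncomm_ring
        calc (h - g) * (1 - k) * a = (h - g) * (a - k * a) := by noncomm_ring
          _ = (h - g) * (a - a * k) := by rw [hkc a]
          _ = (h - g) * a - ((h - g) * a) * k := by noncomm_ring
          _ = 0 := by rw [h1]; noncomm_ring
      calc (h - g) * (1 - k) * b
          = (h - g) * (1 - k) * (b - a) + (h - g) * (1 - k) * a := by noncomm_ring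
        _ = 0 := by rw [huba, hua, add_zero]
    have hu0 : (h - g) * (1 - k) = 0 := by
      have hann := (hAnn b ((h - g) * (1 - k))).mp (fun r => by
        rw [mul_assoc, ← hucent r, ← mul_assoc, ← hucent b, hub, zero_mul])
      -- hann : h * ((h-g)*(1-k)) = 0
      have : h * ((h - g) * (1 - k)) = (h - g) * (1 - k) := by
        have e : h * ((h - g) * (1 - k)) = (h * h - h * g) * (1 - k) := by noncomm_ring
        rw [e, hhi, ← hgc h, hgh]
      rw [← this, hann]
    have hk_ge : (h - g) * k = h - g := by
      have e2 : (h - g) - (h - g) * k = 0 := by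
        rw [show (h - g) - (h - g) * k = (h - g) * (1 - k) from by noncomm_ring, hu0]
      exact (sub_eq_zero.mp e2).symm
    calc k = k * (h - g) := hk_le.symm
      _ = (h - g) * k := hkc (h - g)
      _ = h - g := hk_ge
  · intro hk2
    -- hk2 : k = h - g
    have hgh : g * h = g := by
      have hsq := hki
      rw [hk2] at hsq
      have e : (h - g) * (h - g) = h * h - g * h - h * g + g * g := by noncomm_ring
      rw [e, hhi, hgi, hgc h] at hsq
      -- hsq : h - h * g - h * g + g = h - g
      have e2 : (h * g + h * g) - (g + g) = (h - g) - (h - h * g - h * g + g) := by abel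
      rw [hsq, sub_self] at e2
      have hsum : h * g + h * g = g + g := sub_eq_zero.mp e2
      have h2gh : 2 * (h * g) = 2 * g := by rw [two_mul, two_mul]; exact hsum
      rw [hgc h]
      exact h2.mul_left_cancel h2gh
    have hgk : g * k = 0 := by
      rw [hk2]
      have : g * (h - g) = g * h - g * g := by noncomm_ring
      rw [this, hgh, hgi]; noncomm_ring
    have : g * (b - a) = 0 := by
      calc g * (b - a) = g * (k * (b - a)) := by rw [hkx]
        _ = (g * k) * (b - a) := by noncomm_ring
        _ = 0 := by rw [hgk]; noncomm_ring
    have hga : g * a = a := by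
      have h1 : (1 : R) * a = a := one_mul a
      exact hgx
    show g * b = a
    calc g * b = g * (b - a) + g * a := by noncomm_ring
      _ = a := by rw [this, hga, zero_add]
end

section
/- Let R be a p.q.-Baer *-ring and suppose a, b ∈ R have a common upper bound in Conrad's order. Then a*rb = C(a)b*rb = C(b)a*ra for all r ∈ R; in particular a*b is self-adjoint, i.e., (a*b)* = a*b. -/
/-- If `a, b` have a common upper bound in Conrad's order on a
p.q.-Baer `*`-ring, then `a* r b = C(a) b* r b = C(b) a* r a` for all `r`;
in particular `a* b` is self-adjoint. -/
theorem stmt7 {R : Type*} [Ring R] [StarRing R] (C : R → R)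
    (hPQ : IsPQBaerStar R) (hC : IsCentralCoverMap C) (hAnn : CoverAnn C)
    (a b c : R) (hac : cle C a c) (hbc : cle C b c) :
    (∀ r : R, star a * r * b = C a * (star b * r * b) ∧
        star a * r * b = C b * (star a * r * a)) ∧
      star (star a * b) = star a * b := by
  obtain ⟨⟨hee, hse⟩, hecen, hea, -⟩ := hC a
  obtain ⟨⟨hff, hsf⟩, hfcen, hfb, -⟩ := hC b
  -- key: C a * b = C b * a
  have key : C a * b = C b * a := by
    conv_lhs => rw [← hbc]
    conv_rhs => rw [← hac]
    rw [← mul_assoc, ← mul_assoc, hecen (C b)]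
  have hsaCa : star a * C a = star a := by
    rw [← hse, ← star_mul, hea]
  have h1 : ∀ r : R, star a * r * b = C a * (star b * r * b) := by
    intro r
    calc star a * r * b = star a * r * (C b * b) := by rw [hfb]
    _ = star a * C b * r * b := by
        rw [mul_assoc (star a) r, ← mul_assoc r, ← hfcen r, ← mul_assoc,
          ← mul_assoc, mul_assoc (star a) (C b) r]
    _ = star (C b * a) * r * b := by rw [star_mul, hsf]
    _ = star (C a * b) * r * b := by rw [key]
    _ = star b * C a * r * b := by rw [star_mul, hse]
    _ = C a * (star b * r * b) := by
        rw [← hecen (star b), mul_assoc, mul_assoc, ← mul_assoc (star b)]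
  have h2 : ∀ r : R, star a * r * b = C b * (star a * r * a) := by
    intro r
    calc star a * r * b = star a * C a * r * b := by rw [hsaCa]
    _ = star a * r * (C a * b) := by
        rw [mul_assoc (star a) (C a) r, hecen r, ← mul_assoc, mul_assoc]
    _ = star a * r * (C b * a) := by rw [key]
    _ = C b * (star a * r * a) := by
        rw [← mul_assoc, ← mul_assoc, ← hfcen (star a * r), mul_assoc,
          mul_assoc]
  refine ⟨fun r => ⟨h1 r, h2 r⟩, ?_⟩
  have := h1 1
  simp only [mul_one] at this
  rw [this, star_mul, star_mul, star_star, hse, hecen]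
end

section
/- Let R be a p.q.-Baer *-ring and suppose a, b ∈ R have a common upper bound in Conrad's order. Then the infimum a ∧ b of a and b exists in Conrad's order and equals aC(b) = bC(a). -/
/-- If `a, b` have a common upper bound in Conrad's order on a
p.q.-Baer `*`-ring, then `a ∧ b` exists and equals `a C(b) = b C(a)`. -/
theorem stmt8 {R : Type*} [Ring R] [StarRing R] (C : R → R)
    (hPQ : IsPQBaerStar R) (hC : IsCentralCoverMap C) (hAnn : CoverAnn C)
    (a b c : R) (hac : cle C a c) (hbc : cle C b c) :
    IsCInf C a b (a * C b) ∧ a * C b = b * C a := by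

  obtain ⟨⟨ha2, haS⟩, haC, haa, hamin⟩ := hC a
  obtain ⟨⟨hb2, hbS⟩, hbC, hbb, hbmin⟩ := hC b
  obtain ⟨⟨hm2, hmS⟩, hmC, hmm, hmmin⟩ := hC (a * C b)
  have hac' : C a * c = a := hac
  have hbc' : C b * c = b := hbc
  -- a * C b = C a * C b * c
  have hmc : a * C b = C a * C b * c := by
    nth_rewrite 1 [← hac']
    rw [mul_assoc, ← hbC c, ← mul_assoc]
  have hCab : C a * b = a * C b := by
    rw [hmc, mul_assoc, hbc']
  have hsymm : a * C b = b * C a := hCab.symm.trans (haC b)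
  have hpP : IsProjection (C a * C b) := by
    constructor
    · rw [mul_assoc, ← mul_assoc (C b), ← haC (C b), mul_assoc, hb2, ← mul_assoc, ha2]
    · rw [star_mul, haS, hbS, ← haC (C b)]
  have hpC : IsCentral (C a * C b) := by
    intro r
    rw [mul_assoc, hbC r, ← mul_assoc, haC r, mul_assoc]
  have hpm : C a * C b * (a * C b) = a * C b := by
    rw [← mul_assoc, mul_assoc (C a), hbC a, ← mul_assoc, haa, mul_assoc, hb2]
  have hCmp : C (a * C b) * (C a * C b) = C (a * C b) := hmmin _ hpP hpC hpm
  refine ⟨⟨?_, ?_, ?_⟩, hsymm⟩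
  · show C (a * C b) * a = a * C b
    calc C (a * C b) * a = C (a * C b) * (C a * C b) * a := by rw [hCmp]
      _ = C (a * C b) * (C a * (C b * a)) := by rw [mul_assoc, mul_assoc]
      _ = C (a * C b) * (C a * (a * C b)) := by rw [hbC a]
      _ = C (a * C b) * (C a * a * C b) := by rw [← mul_assoc (C a)]
      _ = C (a * C b) * (a * C b) := by rw [haa]
      _ = a * C b := hmm
  · show C (a * C b) * b = a * C b
    calc C (a * C b) * b = C (a * C b) * (C a * C b) * b := by rw [hCmp]
      _ = C (a * C b) * (C a * (C b * b)) := by rw [mul_assoc, mul_assoc]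
      _ = C (a * C b) * (C a * b) := by rw [hbb]
      _ = C (a * C b) * (a * C b) := by rw [hCab]
      _ = a * C b := hmm
  · intro d hd1 hd2
    have hd1' : C d * a = d := hd1
    have hd2' : C d * b = d := hd2
    show C d * (a * C b) = d
    rw [← mul_assoc, hd1', ← hbC d, ← hd2', ← mul_assoc, hbC (C d), mul_assoc, hbb]
end

section
/- Let R be a p.q.-Baer *-ring and suppose a, b ∈ R have a common upper bound in Conrad's order. Then the supremum a ∨ b exists in Conrad's order and equals a + b − aC(b). -/
/-- If `a, b` have a common upper bound in Conrad's order on a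
p.q.-Baer `*`-ring, then `a ∨ b` exists and equals `a + b - a C(b)`. -/
theorem stmt9 {R : Type*} [Ring R] [StarRing R] (C : R → R)
    (hPQ : IsPQBaerStar R) (hC : IsCentralCoverMap C) (hAnn : CoverAnn C)
    (a b c : R) (hac : cle C a c) (hbc : cle C b c) :
    IsCSup C a b (a + b - a * C b) := by
  obtain ⟨⟨hpa, hsa⟩, za, fa, ma⟩ := hC a
  obtain ⟨⟨hpb, hsb⟩, zb, fb, mb⟩ := hC b
  set p := C a with hp
  set q := C b with hq
  have hpq : p * q = q * p := za q
  -- key: C a * b = a * C b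
  have hab : p * b = a * q := by
    calc p * b = p * (q * c) := by rw [hbc]
      _ = q * (p * c) := by rw [← mul_assoc, hpq, mul_assoc]
      _ = q * a := by rw [hac]
      _ = a * q := zb a
  set s := a + b - a * q with hs
  -- a ≤ s and b ≤ s
  have has : p * s = a := by
    have h1 : p * (a * q) = a * q := by rw [← mul_assoc, fa]
    rw [hs, mul_sub, mul_add, fa, hab, h1]
    abel
  have hbs : q * s = b := by
    have h1 : q * (a * q) = q * a := by rw [← zb a, ← mul_assoc, hpb]
    rw [hs, mul_sub, mul_add, fb, h1]
    abel
  refine ⟨has, hbs, ?_⟩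
  intro d had hbd
  obtain ⟨⟨hps, hss⟩, zs, fs, ms⟩ := hC s
  -- e = p + q - p*q is a central projection fixing s
  set e := p + q - p * q with he
  have hpq' : ∀ r : R, q * (p * r) = p * (q * r) := fun r => by
    rw [← mul_assoc, ← hpq, mul_assoc]
  have hp' : ∀ r : R, p * (p * r) = p * r := fun r => by rw [← mul_assoc, hpa]
  have hq' : ∀ r : R, q * (q * r) = q * r := fun r => by rw [← mul_assoc, hpb]
  have heproj : IsProjection e := by
    constructor
    · rw [he]
      simp only [mul_add, add_mul, mul_sub, sub_mul, mul_assoc, hpa, hpb, hp', hq',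
        hpq.symm, hpq', ← hq, ← hp]
      abel
    · rw [he]
      simp only [star_sub, star_add, star_mul, hsa, hsb, hpq]
  have hecent : IsCentral e := by
    intro r
    rw [he]
    simp only [sub_mul, add_mul, mul_sub, mul_add, za r, zb r, mul_assoc]
    rw [← mul_assoc r p q, ← za r, mul_assoc]
  have hea : e * a = a := by
    have hqa : q * a = a * q := zb a
    rw [he, sub_mul, add_mul, fa, mul_assoc, hqa, ← mul_assoc, fa]
    abel
  have heb : e * b = b := by
    rw [he, sub_mul, add_mul, fb, mul_assoc, fb, hab]
    abel
  have hes : e * s = s := by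
    rw [hs, mul_sub, mul_add, hea, heb, ← mul_assoc, hea]
  have hse : C s * e = C s := ms e heproj hecent hes
  have hed : e * d = s := by
    rw [he, sub_mul, add_mul, had, hbd, mul_assoc, hbd, hab, hs]
  calc C s * d = C s * e * d := by rw [hse]
    _ = C s * s := by rw [mul_assoc, hed]
    _ = s := fs
end

section
/- Let R be a p.q.-Baer *-ring and a, b ∈ R. If aC(b) = bC(a), then a and b have a common upper bound in Conrad's order; in fact a + b − aC(b) is a common upper bound of a and b. -/
/-- In a p.q.-Baer `*`-ring, if `a C(b) = b C(a)` then
`a + b - a C(b)` is a common upper bound of `a` and `b` in Conrad's order. -/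
theorem stmt10 {R : Type*} [Ring R] [StarRing R] (C : R → R)
    (hPQ : IsPQBaerStar R) (hC : IsCentralCoverMap C) (hAnn : CoverAnn C)
    (a b : R) (h : a * C b = b * C a) :
    cle C a (a + b - a * C b) ∧ cle C b (a + b - a * C b) := by
  obtain ⟨⟨haid, -⟩, hacen, hax, -⟩ := hC a
  obtain ⟨⟨hbid, -⟩, hbcen, hbx, -⟩ := hC b
  constructor
  · show C a * (a + b - a * C b) = a
    have h1 : C a * b = a * C b := by rw [hacen b, ← h]
    have h2 : C a * (a * C b) = a * C b := by rw [← mul_assoc, hax]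
    rw [mul_sub, mul_add, hax, h1, h2, add_sub_cancel_right]
  · show C b * (a + b - a * C b) = b
    have h1 : C b * a = a * C b := hbcen a
    have h2 : C b * (a * C b) = a * C b := by
      rw [← hbcen a, ← mul_assoc, hbid]
    rw [mul_sub, mul_add, hbx, h1, h2, add_sub_cancel_left]
end

section
/- Let R be a p.q.-Baer *-ring. Then R is a lattice under Conrad's order if and only if aC(b) = bC(a) for all a, b ∈ R. -/
/-- The "commuting with central projections" lemma: `C (e * x) = e * C x`
for every central projection `e`. -/
lemma cover_smul {R : Type*} [Ring R] [StarRing R] (C : R → R)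
    (hC : IsCentralCoverMap C) (hAnn : CoverAnn C)
    (e x : R) (hp : IsProjection e) (hc : IsCentral e) :
    C (e * x) = e * C x := by
  obtain ⟨hfp, hfc, hfcov, hfmin⟩ := hC (e * x)
  obtain ⟨hxp, hxc, hxcov, -⟩ := hC x
  set f := C (e * x) with hf
  have hproj : IsProjection (e * C x) := by
    constructor
    · calc e * C x * (e * C x) = e * (C x * e) * C x := by noncomm_ring
        _ = e * (e * C x) * C x := by rw [hxc e]
        _ = (e * e) * (C x * C x) := by noncomm_ring
        _ = e * C x := by rw [hp.1, hxp.1]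
    · rw [star_mul, hxp.2, hp.2, hxc e]
  have hcent : IsCentral (e * C x) := by
    intro r
    calc e * C x * r = e * (r * C x) := by rw [mul_assoc, hxc r]
      _ = (e * r) * C x := by rw [mul_assoc]
      _ = r * (e * C x) := by rw [hc r, mul_assoc]
  have hfix : (e * C x) * (e * x) = e * x := by
    calc e * C x * (e * x) = e * (C x * e) * x := by noncomm_ring
      _ = e * (e * C x) * x := by rw [hxc e]
      _ = (e * e) * (C x * x) := by noncomm_ring
      _ = e * x := by rw [hp.1, hxcov]
  have hA : f * (e * C x) = f := hfmin _ hproj hcent hfix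
  have hB : C x * (e * (1 - f)) = 0 := by
    apply (hAnn x (e * (1 - f))).mp
    intro r
    calc x * r * (e * (1 - f))
        = (x * r) * e - ((x * r) * e) * f := by noncomm_ring
      _ = e * (x * r) - (e * (x * r)) * f := by rw [← hc (x * r)]
      _ = e * (x * r) - f * (e * (x * r)) := by rw [hfc (e * (x * r))]
      _ = e * x * r - f * (e * x) * r := by noncomm_ring
      _ = e * x * r - e * x * r := by rw [hfcov]
      _ = 0 := sub_self _
  have hB' : C x * e = C x * e * f := by
    have h2 : C x * e - C x * e * f = 0 := by
      calc C x * e - C x * e * f = C x * (e * (1 - f)) := by noncomm_ring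
        _ = 0 := hB
    exact sub_eq_zero.mp h2
  have hA' : e * C x * f = f := by rw [← hfc (e * C x), hA]
  calc f = e * C x * f := hA'.symm
    _ = C x * e * f := by rw [hxc e]
    _ = C x * e := hB'.symm
    _ = e * C x := hxc e

/-- Construction of the infimum `C b * a` under the compatibility
condition `C b * a = C a * b`. -/
lemma inf_aux {R : Type*} [Ring R] [StarRing R] (C : R → R)
    (hC : IsCentralCoverMap C) (hAnn : CoverAnn C)
    (a b : R) (hk : C b * a = C a * b) :
    IsCInf C a b (C b * a) := by
  obtain ⟨⟨haI, haS⟩, hac, hacov, -⟩ := hC a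
  obtain ⟨⟨hbI, hbS⟩, hbc, hbcov, -⟩ := hC b
  have hm : C (C b * a) = C b * C a :=
    cover_smul C hC hAnn (C b) a ⟨hbI, hbS⟩ hbc
  refine ⟨?_, ?_, ?_⟩
  · show C (C b * a) * a = C b * a
    rw [hm, mul_assoc, hacov]
  · show C (C b * a) * b = C b * a
    rw [hm, mul_assoc, ← hk, ← mul_assoc, hbI]
  · intro d hda hdb
    obtain ⟨-, hdc, -, -⟩ := hC d
    have hda' : C d * a = d := hda
    have hdb' : C d * b = d := hdb
    show C d * (C b * a) = d
    calc C d * (C b * a) = (C d * C b) * a := (mul_assoc _ _ _).symm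
      _ = (C b * C d) * a := by rw [hdc (C b)]
      _ = C b * (C d * a) := mul_assoc _ _ _
      _ = C b * d := by rw [hda']
      _ = C b * (C d * b) := by rw [hdb']
      _ = (C b * C d) * b := (mul_assoc _ _ _).symm
      _ = (C d * C b) * b := by rw [hdc (C b)]
      _ = C d * (C b * b) := mul_assoc _ _ _
      _ = C d * b := by rw [hbcov]
      _ = d := hdb'

/-- Construction of the supremum `a + b - C b * a` under the compatibility
condition `C b * a = C a * b`. -/
lemma sup_aux {R : Type*} [Ring R] [StarRing R] (C : R → R)
    (hC : IsCentralCoverMap C) (hAnn : CoverAnn C)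
    (a b : R) (hk : C b * a = C a * b) :
    IsCSup C a b (a + b - C b * a) := by
  obtain ⟨⟨haI, haS⟩, hac, hacov, -⟩ := hC a
  obtain ⟨⟨hbI, hbS⟩, hbc, hbcov, -⟩ := hC b
  set g := C a + C b - C a * C b with hg
  have hga : C a * g = C a := by
    calc C a * g = C a * C a + C a * C b - (C a * C a) * C b := by
          rw [hg]; noncomm_ring
      _ = C a + C a * C b - C a * C b := by rw [haI]
      _ = C a := by abel
  have hgb : C b * g = C b := by
    calc C b * g = C b * C a + C b * C b - (C b * C a) * C b := by
          rw [hg]; noncomm_ring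
      _ = C a * C b + C b - (C a * C b) * C b := by rw [hbc (C a), hbI]
      _ = C a * C b + C b - C a * (C b * C b) := by rw [mul_assoc]
      _ = C a * C b + C b - C a * C b := by rw [hbI]
      _ = C b := by abel
  have hgprod : (C a * C b) * g = C a * C b := by
    rw [mul_assoc, hgb]
  have hgI : g * g = g := by
    calc g * g = C a * g + C b * g - (C a * C b) * g := by
          nth_rewrite 1 [hg]; noncomm_ring
      _ = C a + C b - C a * C b := by rw [hga, hgb, hgprod]
      _ = g := hg.symm
  have hgS : star g = g := by
    rw [hg, star_sub, star_add, star_mul, haS, hbS, hbc (C a)]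
  have hgc : IsCentral g := by
    intro r
    calc g * r = C a * r + C b * r - C a * (C b * r) := by
          rw [hg]; noncomm_ring
      _ = r * C a + r * C b - C a * (r * C b) := by rw [hac r, hbc r]
      _ = r * C a + r * C b - (C a * r) * C b := by rw [mul_assoc]
      _ = r * C a + r * C b - (r * C a) * C b := by rw [hac r]
      _ = r * g := by rw [hg]; noncomm_ring
  refine ⟨?_, ?_, ?_⟩
  · show C a * (a + b - C b * a) = a
    calc C a * (a + b - C b * a)
        = C a * a + C a * b - (C a * C b) * a := by noncomm_ring
      _ = C a * a + C a * b - (C b * C a) * a := by rw [hac (C b)]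
      _ = C a * a + C a * b - C b * (C a * a) := by rw [mul_assoc]
      _ = a + C a * b - C b * a := by rw [hacov]
      _ = a + C a * b - C a * b := by rw [hk]
      _ = a := by abel
  · show C b * (a + b - C b * a) = b
    calc C b * (a + b - C b * a)
        = C b * a + C b * b - (C b * C b) * a := by noncomm_ring
      _ = C b * a + b - C b * a := by rw [hbcov, hbI]
      _ = b := by abel
  · intro d hda hdb
    obtain ⟨-, -, hdcov, -⟩ := hC d
    have hda' : C a * d = a := hda
    have hdb' : C b * d = b := hdb
    have hsd' : g * d = a + b - C b * a := by
      calc g * d = C a * d + C b * d - C a * (C b * d) := by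
            rw [hg]; noncomm_ring
        _ = a + b - C a * b := by rw [hda', hdb']
        _ = a + b - C b * a := by rw [hk]
    have hsd : a + b - C b * a = g * d := hsd'.symm
    have hcs : C (g * d) = g * C d :=
      cover_smul C hC hAnn g d ⟨hgI, hgS⟩ hgc
    show C (a + b - C b * a) * d = a + b - C b * a
    rw [hsd, hcs, mul_assoc, hdcov]

/-- A p.q.-Baer `*`-ring is a lattice under Conrad's order
iff `a C(b) = b C(a)` for all `a, b`. -/
theorem stmt11 {R : Type*} [Ring R] [StarRing R] (C : R → R)
    (hPQ : IsPQBaerStar R) (hC : IsCentralCoverMap C) (hAnn : CoverAnn C) :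
    (∀ a b : R, (∃ s : R, IsCSup C a b s) ∧ (∃ m : R, IsCInf C a b m)) ↔
      ∀ a b : R, a * C b = b * C a := by
  constructor
  · intro h a b
    obtain ⟨⟨s, hsa, hsb, -⟩, -⟩ := h a b
    obtain ⟨-, hac, -, -⟩ := hC a
    obtain ⟨-, hbc, -, -⟩ := hC b
    have hsa' : C a * s = a := hsa
    have hsb' : C b * s = b := hsb
    calc a * C b = (C a * s) * C b := by rw [hsa']
      _ = C a * (s * C b) := mul_assoc _ _ _
      _ = C a * (C b * s) := by rw [← hbc s]
      _ = (C a * C b) * s := (mul_assoc _ _ _).symm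
      _ = (C b * C a) * s := by rw [hac (C b)]
      _ = C b * (C a * s) := mul_assoc _ _ _
      _ = C b * (s * C a) := by rw [hac s]
      _ = (C b * s) * C a := (mul_assoc _ _ _).symm
      _ = b * C a := by rw [hsb']
  · intro hcomp a b
    obtain ⟨-, hac, -, -⟩ := hC a
    obtain ⟨-, hbc, -, -⟩ := hC b
    have hk : C b * a = C a * b := by
      calc C b * a = a * C b := hbc a
        _ = b * C a := hcomp a b
        _ = C a * b := (hac b).symm
    exact ⟨⟨_, sup_aux C hC hAnn a b hk⟩, ⟨_, inf_aux C hC hAnn a b hk⟩⟩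
end

section
/- Let R be a p.q.-Baer *-ring and a, b, c ∈ R. If a ≤ c, b ≤ c in Conrad's order and aR ∩ bR = {0}, then a + b ≤ c. -/
/-- In a p.q.-Baer `*`-ring, if `a ≤ c`, `b ≤ c` in Conrad's
order and `aR ∩ bR = {0}`, then `a + b ≤ c`. -/
theorem stmt12 {R : Type*} [Ring R] [StarRing R] (C : R → R)
    (hPQ : IsPQBaerStar R) (hC : IsCentralCoverMap C) (hAnn : CoverAnn C)
    (a b c : R) (hac : cle C a c) (hbc : cle C b c)
    (hint : {x : R | ∃ r : R, x = a * r} ∩ {x : R | ∃ r : R, x = b * r} = {0}) :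
    cle C (a + b) c := by
  obtain ⟨⟨ha2, -⟩, haCen, haX, -⟩ := hC a
  obtain ⟨⟨hb2, -⟩, hbCen, hbX, -⟩ := hC b
  obtain ⟨-, -, hsX, -⟩ := hC (a + b)
  unfold cle at hac hbc ⊢
  set ea := C a with hea
  set eb := C b with heb
  have pushA : ∀ x y : R, x * (ea * y) = ea * (x * y) := fun x y => by
    rw [← mul_assoc, ← haCen, mul_assoc]
  have pushB : ∀ x y : R, x * (eb * y) = eb * (x * y) := fun x y => by
    rw [← mul_assoc, ← hbCen, mul_assoc]
  have idemA : ∀ x : R, ea * (ea * x) = ea * x := fun x => by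
    rw [← mul_assoc, ha2]
  have idemB : ∀ x : R, eb * (eb * x) = eb * x := fun x => by
    rw [← mul_assoc, hb2]
  have key : ∀ r : R, (a + b) * r * (c - (a + b)) = 0 := by
    intro r
    have hab : a * r * b = 0 := by
      have hmem : a * r * b ∈ ({(0 : R)} : Set R) := by
        rw [← hint]
        refine ⟨⟨r * b, by rw [mul_assoc]⟩, ⟨ea * (r * b), ?_⟩⟩
        rw [← hac, ← hbc]
        simp only [mul_assoc]
        simp only [pushB, idemB]
        simp only [pushA, idemA]
      simpa using hmem
    have hba : b * r * a = 0 := by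
      have hmem : b * r * a ∈ ({(0 : R)} : Set R) := by
        rw [← hint]
        refine ⟨⟨eb * (r * a), ?_⟩, ⟨r * a, by rw [mul_assoc]⟩⟩
        rw [← hac, ← hbc]
        simp only [mul_assoc]
        simp only [pushB, idemB]
        simp only [pushA, idemA]
      simpa using hmem
    have h1 : a * r * (c - a) = 0 := by
      rw [← hac]
      simp only [mul_sub, mul_assoc]
      simp only [pushA, idemA]
      exact sub_self _
    have h2 : b * r * (c - b) = 0 := by
      rw [← hbc]
      simp only [mul_sub, mul_assoc]
      simp only [pushB, idemB]
      exact sub_self _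
    have expand : (a + b) * r * (c - (a + b)) =
        a * r * (c - a) + b * r * (c - b) - a * r * b - b * r * a := by
      noncomm_ring
    rw [expand, h1, h2, hab, hba]
    simp
  have h0 : C (a + b) * (c - (a + b)) = 0 := (hAnn (a + b) (c - (a + b))).mp key
  rw [mul_sub, hsX, sub_eq_zero] at h0
  rw [h0]
end

section
/- Let R be a p.q.-Baer *-ring and a, b ∈ R orthogonal elements, i.e., C(a)C(b) = 0. Then a ∧ b and a ∨ b exist in Conrad's order, with a ∧ b = 0 and a ∨ b = a + b. -/
/-- In a p.q.-Baer `*`-ring, if `C(a) C(b) = 0` then `a ∧ b`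
and `a ∨ b` exist in Conrad's order, with `a ∧ b = 0` and `a ∨ b = a + b`. -/
theorem stmt15 {R : Type*} [Ring R] [StarRing R] (C : R → R)
    (hPQ : IsPQBaerStar R) (hC : IsCentralCoverMap C) (hAnn : CoverAnn C)
    (a b : R) (h : C a * C b = 0) :
    IsCInf C a b 0 ∧ IsCSup C a b (a + b) := by
  obtain ⟨hPa, hca, haa, hmina⟩ := hC a
  obtain ⟨hPb, hcb, hbb, hminb⟩ := hC b
  have hba : C b * C a = 0 := (hcb (C a)).trans h
  have hC0 : C 0 = 0 := by
    have h0 := (hC 0).2.2.2 0 ⟨by noncomm_ring, star_zero R⟩ (fun r => by noncomm_ring) (by noncomm_ring)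
    simpa using h0.symm
  have hab0 : C a * b = 0 := by
    calc C a * b = C a * (C b * b) := by rw [hbb]
    _ = (C a * C b) * b := by rw [mul_assoc]
    _ = 0 := by rw [h, zero_mul]
  have hba0 : C b * a = 0 := by
    calc C b * a = C b * (C a * a) := by rw [haa]
    _ = (C b * C a) * a := by rw [mul_assoc]
    _ = 0 := by rw [hba, zero_mul]
  constructor
  · refine ⟨by rw [cle, hC0, zero_mul], by rw [cle, hC0, zero_mul], ?_⟩
    intro d hda hdb
    have h1 : d = C b * d := by
      calc d = C d * b := hdb.symm
      _ = C d * (C b * b) := by rw [hbb]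
      _ = C b * (C d * b) := by rw [← mul_assoc, ← hcb (C d), mul_assoc]
      _ = C b * d := by rw [hdb]
    have h2 : d = 0 := by
      calc d = C d * a := hda.symm
      _ = C d * (C a * a) := by rw [haa]
      _ = C a * (C d * a) := by rw [← mul_assoc, ← hca (C d), mul_assoc]
      _ = C a * d := by rw [hda]
      _ = C a * (C b * d) := by rw [← h1]
      _ = (C a * C b) * d := by rw [mul_assoc]
      _ = 0 := by rw [h, zero_mul]
    rw [cle, mul_zero, h2]
  · refine ⟨?_, ?_, ?_⟩
    · rw [cle, mul_add, haa, hab0, add_zero]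
    · rw [cle, mul_add, hbb, hba0, zero_add]
    · intro d hda hdb
      have hproj : IsProjection (C a + C b) := by
        constructor
        · calc (C a + C b) * (C a + C b)
              = C a * C a + C a * C b + (C b * C a + C b * C b) := by noncomm_ring
          _ = C a + C b := by rw [hPa.1, hPb.1, h, hba, add_zero, zero_add]
        · rw [star_add, hPa.2, hPb.2]
      have hcent : IsCentral (C a + C b) := fun r => by
        rw [add_mul, mul_add, hca r, hcb r]
      have hfix : (C a + C b) * (a + b) = a + b := by
        calc (C a + C b) * (a + b)
            = C a * a + C a * b + (C b * a + C b * b) := by noncomm_ring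
        _ = a + b := by rw [haa, hbb, hab0, hba0, add_zero, zero_add]
      have he := (hC (a + b)).2.2.2 (C a + C b) hproj hcent hfix
      calc C (a + b) * d = (C (a + b) * (C a + C b)) * d := by rw [he]
      _ = C (a + b) * ((C a + C b) * d) := by rw [mul_assoc]
      _ = C (a + b) * (a + b) := by rw [add_mul, hda, hdb]
      _ = a + b := (hC (a + b)).2.2.1
end

section
/- Let R be a p.q.-Baer *-ring and a, b ∈ R with a ≤ b in Conrad's order. Then there exists c ∈ R with a ⊥ c (i.e., C(a)C(c) = 0) and b = a + c. -/
/-- In a p.q.-Baer `*`-ring, if `a ≤ b` in Conrad's order then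
there exists `c` with `a ⊥ c` (i.e. `C(a) C(c) = 0`) and `b = a + c`. -/
theorem stmt16 {R : Type*} [Ring R] [StarRing R] (C : R → R)
    (hPQ : IsPQBaerStar R) (hC : IsCentralCoverMap C) (hAnn : CoverAnn C)
    (a b : R) (h : cle C a b) :
    ∃ c : R, C a * C c = 0 ∧ b = a + c := by
  obtain ⟨⟨hidem, hstar⟩, hcent, _, _⟩ := hC a
  refine ⟨b - C a * b, ?_, by rw [h]; abel⟩
  set c := b - C a * b with hc
  have hac : C a * c = 0 := by
    rw [hc, mul_sub, ← mul_assoc, hidem, sub_self]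
  have hfproj : IsProjection (1 - C a) := by
    constructor
    · rw [sub_mul, mul_sub, mul_sub, one_mul, mul_one, one_mul, hidem]; abel
    · rw [star_sub, star_one, hstar]
  have hfcent : IsCentral (1 - C a) := fun r => by
    rw [sub_mul, mul_sub, one_mul, mul_one, hcent r]
  have hfc : (1 - C a) * c = c := by rw [sub_mul, one_mul, hac, sub_zero]
  obtain ⟨_, hccent, _, hmin⟩ := hC c
  have := hmin (1 - C a) hfproj hfcent hfc
  rw [mul_sub, mul_one, sub_eq_self] at this
  rw [← hccent (C a)]
  exact this
end

section
/- Let R be a p.q.-Baer *-ring and a, b, c ∈ R with C(a)C(b) = 0, C(a)C(c) = 0, and b ≤ a ∨ c in Conrad's order (where a ∨ c = a + c since a ⊥ c). Then b ≤ c. -/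
/-- In a p.q.-Baer `*`-ring, if `a ⊥ b`, `a ⊥ c` and
`b ≤ a ∨ c = a + c` in Conrad's order, then `b ≤ c`. -/
theorem stmt17 {R : Type*} [Ring R] [StarRing R] (C : R → R)
    (hPQ : IsPQBaerStar R) (hC : IsCentralCoverMap C) (hAnn : CoverAnn C)
    (a b c : R) (hab : C a * C b = 0) (hac : C a * C c = 0)
    (h : cle C b (a + c)) :
    cle C b c := by
  have hca : C a * a = a := (hC a).2.2.1
  have hcent : IsCentral (C a) := (hC a).2.1
  have hba : C b * a = 0 := by
    calc C b * a = C b * (C a * a) := by rw [hca]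
    _ = (C a * C b) * a := by rw [← mul_assoc, hcent (C b)]
    _ = 0 := by rw [hab, zero_mul]
  unfold cle at h ⊢
  rw [mul_add, hba, zero_add] at h
  exact h
end

section
/- A p.q.-Baer *-ring R equipped with Conrad's order ≤ and the orthogonality a ⊥ b iff C(a)C(b) = 0 is a quasi-orthomodular poset: (i) a ⊥ b implies a ∨ b exists; (ii) a ≤ b implies b = a ∨ z for some z with a ⊥ z; (iii) a ⊥ b, a ⊥ c and b ≤ a ∨ c imply b ≤ c. -/
section Aux

variable {R : Type*} [Ring R] [StarRing R] {C : R → R}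

lemma cc_idem (hC : IsCentralCoverMap C) (x : R) : C x * C x = C x := (hC x).1.1
lemma cc_star (hC : IsCentralCoverMap C) (x : R) : star (C x) = C x := (hC x).1.2
lemma cc_comm (hC : IsCentralCoverMap C) (x r : R) : C x * r = r * C x := (hC x).2.1 r
lemma cc_mul (hC : IsCentralCoverMap C) (x : R) : C x * x = x := (hC x).2.2.1

lemma cov_le (hC : IsCentralCoverMap C) {a b : R} (h : cle C a b) :
    C a * C b = C a := by
  have hf : C a * (C a * C b) = C a := by
    apply (hC a).2.2.2
    · constructor
      · rw [mul_assoc, ← mul_assoc (C b), cc_comm hC b (C a),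
          mul_assoc (C a) (C b), cc_idem hC b, ← mul_assoc, cc_idem hC a]
      · rw [star_mul, cc_star hC, cc_star hC, cc_comm hC b (C a)]
    · intro r
      rw [mul_assoc, cc_comm hC b r, ← mul_assoc, cc_comm hC a r, mul_assoc]
    · calc C a * C b * a = C b * (C a * a) := by
            rw [cc_comm hC a (C b), mul_assoc]
        _ = C b * a := by rw [cc_mul hC]
        _ = C b * (C a * b) := by rw [h]
        _ = C a * (C b * b) := by
            rw [← mul_assoc, cc_comm hC b (C a), mul_assoc]
        _ = C a * b := by rw [cc_mul hC]
        _ = a := h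
  rw [← mul_assoc, cc_idem hC] at hf
  exact hf

lemma cc_zero (hC : IsCentralCoverMap C) : C (0 : R) = 0 := by
  have := (hC (0 : R)).2.2.2 0 ⟨by simp, by simp⟩ (fun r => by simp) (by simp)
  simpa using this.symm

lemma cc_mul_self (hC : IsCentralCoverMap C) (a : R) : C a * a = a := cc_mul hC a

lemma orth_mul (hC : IsCentralCoverMap C) {a b : R} (h : C a * C b = 0) :
    C a * b = 0 := by
  rw [← cc_mul hC b, ← mul_assoc, h, zero_mul]

lemma orth_symm (hC : IsCentralCoverMap C) {a b : R} (h : C a * C b = 0) :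
    C b * C a = 0 := by rw [← cc_comm hC a (C b)]; exact h

/-- Key: if `a ⊥ b` then `a + b` is the supremum of `a` and `b`. -/
lemma sum_is_sup (hC : IsCentralCoverMap C) {a b : R} (h : C a * C b = 0) :
    IsCSup C a b (a + b) := by
  have hab : C a * b = 0 := orth_mul hC h
  have hba : C b * a = 0 := orth_mul hC (orth_symm hC h)
  refine ⟨?_, ?_, ?_⟩
  · show C a * (a + b) = a
    rw [mul_add, cc_mul hC, hab, add_zero]
  · show C b * (a + b) = b
    rw [mul_add, cc_mul hC, hba, zero_add]
  · intro d ha hb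
    have hkey : C (a + b) * (C a + C b) = C (a + b) := by
      apply (hC (a + b)).2.2.2
      · constructor
        · rw [mul_add, add_mul, add_mul, cc_idem hC, cc_idem hC, h,
            orth_symm hC h]
          abel
        · rw [star_add, cc_star hC, cc_star hC]
      · intro r
        rw [add_mul, mul_add, cc_comm hC a r, cc_comm hC b r]
      · rw [add_mul, mul_add, mul_add, cc_mul hC, cc_mul hC, hab, hba]
        abel
    show C (a + b) * d = a + b
    calc C (a + b) * d = C (a + b) * ((C a + C b) * d) := by
          rw [← mul_assoc, hkey]
      _ = C (a + b) * (a + b) := by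
          rw [add_mul]; rw [cle] at ha hb; rw [ha, hb]
      _ = a + b := cc_mul hC _

end Aux

/-- A p.q.-Baer `*`-ring with Conrad's order and the
orthogonality `a ⊥ b ↔ C(a) C(b) = 0` is a quasi-orthomodular poset. -/
theorem stmt18 {R : Type*} [Ring R] [StarRing R] (C : R → R)
    (hPQ : IsPQBaerStar R) (hC : IsCentralCoverMap C) (hAnn : CoverAnn C) :
    -- Conrad's relation is a partial order with least element 0
    (∀ a : R, cle C a a) ∧
      (∀ a b : R, cle C a b → cle C b a → a = b) ∧
      (∀ a b c : R, cle C a b → cle C b c → cle C a c) ∧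
      (∀ a : R, cle C 0 a) ∧
      -- ⊥ is an orthogonality relation for the order
      (∀ a b : R, C a * C b = 0 → C b * C a = 0) ∧
      (∀ a b c : R, cle C a b → C b * C c = 0 → C a * C c = 0) ∧
      (∀ a : R, C (0 : R) * C a = 0) ∧
      -- (i) orthogonal elements have a join
      (∀ a b : R, C a * C b = 0 → ∃ s : R, IsCSup C a b s) ∧
      -- (ii) a ≤ b implies b = a ∨ z for some z with a ⊥ z
      (∀ a b : R, cle C a b → ∃ z : R, C a * C z = 0 ∧ IsCSup C a z b) ∧
      -- (iii) a ⊥ b, a ⊥ c and b ≤ a ∨ c imply b ≤ c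
      (∀ a b c s : R, C a * C b = 0 → C a * C c = 0 →
        IsCSup C a c s → cle C b s → cle C b c) := by
  obtain ⟨hrefl, hantisymm, htrans⟩ :
      (∀ a : R, cle C a a) ∧ (∀ a b : R, cle C a b → cle C b a → a = b) ∧
        (∀ a b c : R, cle C a b → cle C b c → cle C a c) := by
    refine ⟨fun a => cc_mul hC a, ?_, ?_⟩
    · intro a b hab hba
      have h1 := cov_le hC hab
      have h2 := cov_le hC hba
      have hCab : C a = C b := by
        rw [← h1, cc_comm hC a (C b), h2]
      rw [cle, hCab, cc_mul hC] at hab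
      exact hab.symm
    · intro a b c hab hbc
      show C a * c = a
      calc C a * c = C a * C b * c := by rw [cov_le hC hab]
        _ = C a * (C b * c) := mul_assoc _ _ _
        _ = C a * b := by rw [hbc]
        _ = a := hab
  refine ⟨hrefl, hantisymm, htrans, ?_, fun a b h => orth_symm hC h, ?_, ?_,
    fun a b h => ⟨a + b, sum_is_sup hC h⟩, ?_, ?_⟩
  · intro a; show C 0 * a = 0; rw [cc_zero hC, zero_mul]
  · intro a b c hab hbc
    rw [← cov_le hC hab, mul_assoc, hbc, mul_zero]
  · intro a; rw [cc_zero hC, zero_mul]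
  · -- (ii)
    intro a b hab
    refine ⟨b - a, ?_, ?_⟩
    · have haz : C a * (b - a) = 0 := by
        have haa : C a * a = a := cc_mul hC a
        rw [mul_sub, hab, haa, sub_self]
      have : C (b - a) * C a = 0 := by
        apply (hAnn (b - a) (C a)).mp
        intro r
        rw [mul_assoc, ← cc_comm hC a r, ← mul_assoc, ← cc_comm hC a (b - a),
          haz, zero_mul]
      exact orth_symm hC this
    · have haz : C a * (b - a) = 0 := by
        have haa : C a * a = a := cc_mul hC a
        rw [mul_sub, hab, haa, sub_self]
      have horth : C a * C (b - a) = 0 := by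
        apply orth_symm hC
        apply (hAnn (b - a) (C a)).mp
        intro r
        rw [mul_assoc, ← cc_comm hC a r, ← mul_assoc, ← cc_comm hC a (b - a),
          haz, zero_mul]
      have := sum_is_sup hC horth
      rwa [add_sub_cancel] at this
  · -- (iii)
    intro a b c s hab hac hs hbs
    have hsum := sum_is_sup hC hac
    have hseq : s = a + c := hantisymm s (a + c)
      (hs.2.2 (a + c) hsum.1 hsum.2.1) (hsum.2.2 s hs.1 hs.2.1)
    rw [cle, hseq] at hbs
    have hba : C b * a = 0 := orth_mul hC (orth_symm hC hab)
    show C b * c = b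
    calc C b * c = C b * a + C b * c := by rw [hba, zero_add]
      _ = C b * (a + c) := (mul_add _ _ _).symm
      _ = b := hbs
end

section
/- Let R = {x ∈ ∏_{i=1}^∞ ℚ : x_i ∈ ℤ for all but finitely many i}, a commutative *-ring with identity involution. Then R is a Rickart *-ring: for every a ∈ R, the annihilator of a equals bR where b is the characteristic sequence of the zero set of a, a projection; but R is not orthogonally complete: the orthogonal set {c_n}, where c_n has 1/2 in coordinate n and 0 elsewhere, has no supremum under Conrad's order. -/
/-- Conrad's order on a commutative reduced ring: `a ≤ b` iff `a * b = a * a`. -/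
def cleComm {A : Type*} [CommRing A] (a b : A) : Prop := a * b = a * a

/-- `R = {x ∈ ∏ ℚ : x i ∈ ℤ for all but finitely many i}` is a
subring of `∏ ℚ` and (with the identity involution) a Rickart `*`-ring: the
annihilator of every `a ∈ R` is `bR ∩ R` where `b` is the characteristic
sequence of the zero set of `a`, a projection in `R`.  But `R` is not
orthogonally complete: the orthogonal set `{cₙ}`, where `cₙ` has `1/2` in
coordinate `n` and `0` elsewhere, has no supremum in `R` under Conrad's
order. -/
theorem stmt19 (S : Set (ℕ → ℚ))
    (hS : S = {x | {i : ℕ | ¬ ∃ n : ℤ, x i = (n : ℚ)}.Finite})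
    (c : ℕ → (ℕ → ℚ))
    (hc : ∀ n i : ℕ, c n i = if i = n then (1 : ℚ) / 2 else 0) :
    -- S is a subring of the product ring ∏ ℚ
    ((1 : ℕ → ℚ) ∈ S ∧ (∀ x ∈ S, ∀ y ∈ S, x + y ∈ S) ∧
      (∀ x ∈ S, -x ∈ S) ∧ (∀ x ∈ S, ∀ y ∈ S, x * y ∈ S)) ∧
    -- S is a Rickart *-ring (the involution being the identity): for each
    -- a ∈ S the characteristic sequence b of the zero set of a is a
    -- projection in S generating the annihilator of a in S
    (∀ a ∈ S, ∀ b : ℕ → ℚ, (∀ i : ℕ, b i = if a i = 0 then 1 else 0) →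
      b ∈ S ∧ b * b = b ∧ ∀ x ∈ S, (a * x = 0 ↔ ∃ y ∈ S, x = b * y)) ∧
    -- each cₙ lies in S and the family {cₙ} is orthogonal
    ((∀ n : ℕ, c n ∈ S) ∧ ∀ m n : ℕ, m ≠ n → c m * c n = 0) ∧
    -- but {cₙ} has no supremum in S under Conrad's order
    ¬ ∃ s ∈ S, (∀ n : ℕ, cleComm (c n) s) ∧
        ∀ d ∈ S, (∀ n : ℕ, cleComm (c n) d) → cleComm s d := by
  subst hS
  simp only [Set.mem_setOf_eq] at *
  refine ⟨⟨?_, ?_, ?_, ?_⟩, ?_, ⟨?_, ?_⟩, ?_⟩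
  · apply Set.Finite.subset Set.finite_empty
    intro i hi
    exact absurd ⟨1, by simp⟩ hi
  · intro x hx y hy
    apply (hx.union hy).subset
    intro i hi
    simp only [Set.mem_union, Set.mem_setOf_eq]
    by_contra h
    push_neg at h
    obtain ⟨⟨a, ha⟩, ⟨b, hb⟩⟩ := h
    exact hi ⟨a + b, by push_cast; rw [Pi.add_apply, ha, hb]⟩
  · intro x hx
    apply hx.subset
    intro i hi
    simp only [Set.mem_setOf_eq] at *
    rintro ⟨a, ha⟩
    exact hi ⟨-a, by push_cast; rw [Pi.neg_apply, ha]⟩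
  · intro x hx y hy
    apply (hx.union hy).subset
    intro i hi
    simp only [Set.mem_union, Set.mem_setOf_eq]
    by_contra h
    push_neg at h
    obtain ⟨⟨a, ha⟩, ⟨b, hb⟩⟩ := h
    exact hi ⟨a * b, by push_cast; rw [Pi.mul_apply, ha, hb]⟩
  · intro a ha b hb
    refine ⟨?_, ?_, ?_⟩
    · apply Set.Finite.subset Set.finite_empty
      intro i hi
      apply absurd _ hi
      rw [hb i]
      split_ifs
      · exact ⟨1, by norm_num⟩
      · exact ⟨0, by norm_num⟩
    · funext i
      rw [Pi.mul_apply, hb i]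
      split_ifs <;> ring
    · intro x hx
      constructor
      · intro h0
        refine ⟨x, hx, ?_⟩
        funext i
        rw [Pi.mul_apply, hb i]
        split_ifs with h
        · ring
        · have := congrFun h0 i
          rw [Pi.mul_apply, Pi.zero_apply] at this
          rcases mul_eq_zero.mp this with h' | h'
          · exact absurd h' h
          · rw [h']; ring
      · rintro ⟨y, hy, rfl⟩
        funext i
        simp only [Pi.mul_apply, Pi.zero_apply, hb i]
        split_ifs with h
        · rw [h]; ring
        · ring
  · intro n
    apply Set.Finite.subset (Set.finite_singleton n)
    intro i hi
    simp only [Set.mem_setOf_eq] at hi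
    simp only [Set.mem_singleton_iff]
    by_contra h
    exact hi ⟨0, by rw [hc n i, if_neg h]; norm_num⟩
  · intro m n hmn
    funext i
    simp only [Pi.mul_apply, Pi.zero_apply, hc]
    split_ifs with h1 h2
    · exact absurd (h1.symm.trans h2) hmn
    all_goals ring
  · rintro ⟨s, hs, hub, -⟩
    have hsn : ∀ n, s n = 1 / 2 := by
      intro n
      have := congrFun (hub n) n
      simp [Pi.mul_apply, hc] at this
      linarith
    have hsub : Set.univ ⊆ {i : ℕ | ¬ ∃ m : ℤ, s i = (m : ℚ)} := by
      rintro i - ⟨m, hm⟩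
      rw [hsn i] at hm
      have h1 : (1 : ℚ) = 2 * m := by linarith
      have h2 : (1 : ℤ) = 2 * m := by exact_mod_cast h1
      omega
    exact (Set.infinite_univ.mono hsub) hs
end
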